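/- Let R be a Markov measure on the path space Ω = D([0,1],X), let 0 ≤ s ≤ t ≤ 1, and let α, β : Ω → [0,∞) be nonnegative measurable functions with α measurable with respect to σ(X_{[0,s]}) and β measurable with respect to σ(X_{[t,1]}). Then for R-almost every ω: if E_R(αβ | X_{[s,t]})(ω) = 0 then E_R(α | X_s)(ω) = 0 or E_R(β | X_t)(ω) = 0; and if E_R(αβ | X_{[s,t]})(ω) > 0 then E_R(α | X_s)(ω) > 0, E_R(β | X_t)(ω) > 0 and E_R(αβ | X_{[s,t]})(ω) = E_R(α | X_s)(ω)·E_R(β | X_t)(ω) ∈ (0,∞]. -/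

import Mathlib

open MeasureTheory Set

/-- A càdlàg path on `[0,1]`: right-continuous with left limits. -/
def IsCadlag {X : Type*} [TopologicalSpace X] (f : Icc (0:ℝ) 1 → X) : Prop :=
  ∀ t : Icc (0:ℝ) 1, ContinuousWithinAt f (Ici t) t ∧
    ∃ l : X, Filter.Tendsto f (nhdsWithin t (Iio t)) (nhds l)

/-- The path space `D([0,1], X)` of càdlàg paths with values in `X`. -/
def PathSpace (X : Type*) [TopologicalSpace X] : Type _ :=
  {f : Icc (0:ℝ) 1 → X // IsCadlag f}

/-- The canonical process `X_t(ω) = ω_t`. -/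
def canon {X : Type*} [TopologicalSpace X] (t : Icc (0:ℝ) 1) : PathSpace X → X :=
  fun ω => ω.1 t

/-- The σ-field on path space is generated by the canonical process. -/
instance pathSpaceMeasurableSpace (X : Type*) [TopologicalSpace X] [MeasurableSpace X] :
    MeasurableSpace (PathSpace X) :=
  ⨆ t : Icc (0:ℝ) 1, MeasurableSpace.comap (canon t) inferInstance

variable {X : Type*} [TopologicalSpace X] [MeasurableSpace X]

/-- The σ-field `σ(X_t)` generated by the position at time `t`. -/
def mAt (t : Icc (0:ℝ) 1) : MeasurableSpace (PathSpace X) :=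
  MeasurableSpace.comap (canon t) inferInstance

/-- The σ-field `σ(X_{[0,t]})` generated by the past up to time `t`. -/
def mUpTo (t : Icc (0:ℝ) 1) : MeasurableSpace (PathSpace X) :=
  ⨆ s : Icc (0:ℝ) 1, ⨆ _ : s ≤ t, MeasurableSpace.comap (canon s) inferInstance

/-- The σ-field `σ(X_{[t,1]})` generated by the future from time `t` on. -/
def mFrom (t : Icc (0:ℝ) 1) : MeasurableSpace (PathSpace X) :=
  ⨆ s : Icc (0:ℝ) 1, ⨆ _ : t ≤ s, MeasurableSpace.comap (canon s) inferInstance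

/-- The σ-field `σ(X_{[s,t]})` generated by the positions between times `s` and `t`. -/
def mBetween (s t : Icc (0:ℝ) 1) : MeasurableSpace (PathSpace X) :=
  ⨆ u : Icc (0:ℝ) 1, ⨆ _ : s ≤ u ∧ u ≤ t, MeasurableSpace.comap (canon u) inferInstance

/-- `C` is (a version of) the conditional expectation, in `[0,∞]`, of the nonnegative
function `Z` given the sub-σ-field `m`, under the (possibly unbounded) measure `R`:
`C` is `m`-measurable and has the same integral as `Z` on every `m`-measurable set.
For a conditionable path measure this characterizes, up to a.e. equality, the monotone
extension `E_R(Z|m) = lim_n E_R(1_{Ω_1 ∪ … ∪ Ω_n}(Z ∧ n)|m)` of the usual conditional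
expectation along a σ-finite partition `(Ω_k)` of `R`. -/
def IsCondExpNN {Ω : Type*} [MeasurableSpace Ω] (R : Measure Ω) (m : MeasurableSpace Ω)
    (Z C : Ω → ENNReal) : Prop :=
  Measurable[m] C ∧
    ∀ s : Set Ω, MeasurableSet[m] s → ∫⁻ ω in s, C ω ∂ R = ∫⁻ ω in s, Z ω ∂ R

/-- A path measure is conditionable if all its time-marginals are σ-finite. -/
def Conditionable (Q : Measure (PathSpace X)) : Prop :=
  ∀ t : Icc (0:ℝ) 1, SigmaFinite (Q.map (canon t))

/-- A path measure `R` is Markov if it is conditionable and, for every time `t`,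
`R(X_{[t,1]} ∈ · | X_{[0,t]}) = R(X_{[t,1]} ∈ · | X_t)`, i.e. every version of the
conditional expectation given `X_t` of the indicator of a future event is also a version
of its conditional expectation given the whole past `X_{[0,t]}`. -/
def IsMarkovMeasure (R : Measure (PathSpace X)) : Prop :=
  Conditionable R ∧
    ∀ t : Icc (0:ℝ) 1, ∀ B : Set (PathSpace X), MeasurableSet[mFrom t] B →
      ∀ C : PathSpace X → ENNReal,
        IsCondExpNN R (mAt t) (B.indicator fun _ => (1 : ENNReal)) C →
        IsCondExpNN R (mUpTo t) (B.indicator fun _ => (1 : ENNReal)) C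

/-!
The Markov property says that the past `σ(X_{[0,t]})` and the future `σ(X_{[t,1]})` are
conditionally independent given `X_t`. Approximating by simple functions, this extends from
indicators of future events to all nonnegative future functions, and conditional independence is
symmetric; hence `E(α | X_s)` is also a version of `E(α | X_{[s,1]})` and `E(β | X_t)` one of
`E(β | X_{[0,t]})`. For `A ∈ σ(X_{[s,t]})`, conditioning first on `X_{[s,1]}` and then on
`X_{[0,t]}` gives `∫_A E(α | X_s) E(β | X_t) = ∫_A αβ`, so
`E(αβ | X_{[s,t]}) = E(α | X_s) E(β | X_t)` almost everywhere; the rest is read off this identity.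
-/

open scoped ENNReal

/-- Conditional independence of `m₁` and `m₂` given `m`, in the form `E(1_B | m₁) = E(1_B | m)`
for every `B ∈ m₂`. -/
def CondIndepNN {Y : Type*} (m m₁ m₂ : MeasurableSpace Y) {m0 : MeasurableSpace Y}
    (R : Measure Y) : Prop :=
  ∀ B : Set Y, MeasurableSet[m₂] B → ∀ C : Y → ℝ≥0∞,
    IsCondExpNN R m (B.indicator fun _ => 1) C → IsCondExpNN R m₁ (B.indicator fun _ => 1) C

section CondExpNN

variable {Y : Type*} {m m₁ m₂ : MeasurableSpace Y} [m0 : MeasurableSpace Y] {R : Measure Y}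
  {Z Z' C C' : Y → ℝ≥0∞}

namespace IsCondExpNN

theorem ae_eq (hm : m ≤ m0) [SigmaFinite (R.trim hm)] (hC : IsCondExpNN R m Z C)
    (hC' : IsCondExpNN R m Z C') : C =ᵐ[R] C' := by
  refine ae_eq_of_ae_eq_trim (hm := hm) <|
    ae_eq_of_forall_setLIntegral_eq_of_sigmaFinite hC.1 hC'.1 fun A hA _ => ?_
  rw [setLIntegral_trim hm hC.1 hA, setLIntegral_trim hm hC'.1 hA, hC.2 A hA, hC'.2 A hA]

theorem ae_le (hm : m ≤ m0) [SigmaFinite (R.trim hm)] (hZ : Z ≤ Z')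
    (hC : IsCondExpNN R m Z C) (hC' : IsCondExpNN R m Z' C') : C ≤ᵐ[R] C' := by
  refine ae_le_of_ae_le_trim (hm := hm) <|
    ae_le_of_forall_setLIntegral_le_of_sigmaFinite hC.1 fun A hA _ => ?_
  rw [setLIntegral_trim hm hC.1 hA, setLIntegral_trim hm hC'.1 hA, hC.2 A hA, hC'.2 A hA]
  exact lintegral_mono hZ

theorem congr_ae (hC : IsCondExpNN R m Z C) (hC' : Measurable[m] C') (h : C =ᵐ[R] C') :
    IsCondExpNN R m Z C' :=
  ⟨hC', fun A hA => by rw [← lintegral_congr_ae (ae_restrict_of_ae h), hC.2 A hA]⟩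

theorem add (hm : m ≤ m0) (hZ : Measurable Z) (hC : IsCondExpNN R m Z C)
    (hC' : IsCondExpNN R m Z' C') : IsCondExpNN R m (Z + Z') (C + C') := by
  refine ⟨hC.1.add hC'.1, fun A hA => ?_⟩
  simp only [Pi.add_apply]
  rw [lintegral_add_left (hC.1.mono hm le_rfl), lintegral_add_left hZ, hC.2 A hA, hC'.2 A hA]

theorem const_mul (hm : m ≤ m0) (hZ : Measurable Z) (hC : IsCondExpNN R m Z C) (c : ℝ≥0∞) :
    IsCondExpNN R m (fun ω => c * Z ω) (fun ω => c * C ω) := by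
  refine ⟨hC.1.const_mul c, fun A hA => ?_⟩
  rw [lintegral_const_mul c (hC.1.mono hm le_rfl), lintegral_const_mul c hZ, hC.2 A hA]

theorem iSup (hm : m ≤ m0) [SigmaFinite (R.trim hm)] {Zn Cn : ℕ → Y → ℝ≥0∞}
    (hZ : ∀ n, Measurable (Zn n)) (hZ_mono : Monotone Zn)
    (hC : ∀ n, IsCondExpNN R m (Zn n) (Cn n)) :
    IsCondExpNN R m (fun ω => ⨆ n, Zn n ω) (fun ω => ⨆ n, Cn n ω) := by
  have hC_mono : ∀ᵐ ω ∂ R, Monotone fun n => Cn n ω := by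
    filter_upwards [ae_all_iff.2 fun n => (hC n).ae_le hm (hZ_mono n.le_succ) (hC (n + 1))]
      with ω hω
    exact monotone_nat_of_le_succ hω
  refine ⟨Measurable.iSup fun n => (hC n).1, fun A hA => ?_⟩
  rw [lintegral_iSup' (fun n => ((hC n).1.mono hm le_rfl).aemeasurable)
      (ae_restrict_of_ae hC_mono), lintegral_iSup hZ hZ_mono]
  exact iSup_congr fun n => (hC n).2 A hA

theorem restrict (hm : m ≤ m0) (hC : IsCondExpNN R m Z C) {A : Set Y}
    (hA : MeasurableSet[m] A) : IsCondExpNN (R.restrict A) m Z C :=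
  ⟨hC.1, fun s hs => by
    rw [Measure.restrict_restrict (hm s hs), hC.2 _ (hs.inter hA)]⟩

theorem trim_withDensity (hm : m ≤ m0) (hC : IsCondExpNN R m Z C) :
    (R.withDensity C).trim hm = (R.withDensity Z).trim hm := by
  refine @Measure.ext _ m _ _ fun A hA => ?_
  rw [trim_measurableSet_eq hm hA, trim_measurableSet_eq hm hA, withDensity_apply _ (hm A hA),
    withDensity_apply _ (hm A hA), hC.2 A hA]

theorem lintegral_mul (hm : m ≤ m0) (hZ : Measurable Z) (hC : IsCondExpNN R m Z C)
    {f : Y → ℝ≥0∞} (hf : Measurable[m] f) :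
    ∫⁻ ω, C ω * f ω ∂ R = ∫⁻ ω, Z ω * f ω ∂ R := by
  have hf₀ : Measurable f := hf.mono hm le_rfl
  calc ∫⁻ ω, C ω * f ω ∂ R
      = ∫⁻ ω, f ω ∂(R.withDensity C).trim hm := by
        rw [lintegral_trim hm hf,
          lintegral_withDensity_eq_lintegral_mul _ (hC.1.mono hm le_rfl) hf₀]
        rfl
    _ = ∫⁻ ω, Z ω * f ω ∂ R := by
        rw [hC.trim_withDensity hm, lintegral_trim hm hf,
          lintegral_withDensity_eq_lintegral_mul _ hZ hf₀]
        rfl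

end IsCondExpNN

theorem exists_isCondExpNN_indicator_one (hm : m ≤ m0) [SigmaFinite (R.trim hm)] (B : Set Y) :
    ∃ C, IsCondExpNN R m (B.indicator fun _ => 1) C := by
  set ν : @Measure Y m := (R.withDensity (B.indicator fun _ => 1)).trim hm
  have hν : ν ≤ R.trim hm := @Measure.le_intro _ m _ _ fun A hA _ => by
    rw [trim_measurableSet_eq hm hA, trim_measurableSet_eq hm hA, withDensity_apply _ (hm A hA)]
    exact (lintegral_mono fun ω => indicator_le (fun _ _ => le_rfl) ω).trans_eq
      (setLIntegral_one A)
  have : SigmaFinite ν := Measure.sigmaFinite_of_le _ hν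
  refine ⟨ν.rnDeriv (R.trim hm), Measure.measurable_rnDeriv _ _, fun A hA => ?_⟩
  rw [← setLIntegral_trim hm (Measure.measurable_rnDeriv _ _) hA,
    Measure.setLIntegral_rnDeriv' (Measure.absolutelyContinuous_of_le hν) hA,
    trim_measurableSet_eq hm hA, withDensity_apply _ (hm A hA)]

theorem setLIntegral_eq_lintegral_indicator_one_mul {B : Set Y} (hB : MeasurableSet B)
    (f : Y → ℝ≥0∞) : ∫⁻ ω in B, f ω ∂ R = ∫⁻ ω, B.indicator (fun _ => 1) ω * f ω ∂ R := by
  rw [← lintegral_indicator hB]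
  congr 1 with ω
  simpa using indicator_mul_left B (fun _ => (1 : ℝ≥0∞)) f

namespace CondIndepNN

theorem isCondExpNN (hR : CondIndepNN m m₁ m₂ R) (hm : m ≤ m₁) (hm₁ : m₁ ≤ m0) (hm₂ : m₂ ≤ m0)
    [SigmaFinite (R.trim (hm.trans hm₁))] {g : Y → ℝ≥0∞} (hg : Measurable[m₂] g)
    (hC : IsCondExpNN R m g C) : IsCondExpNN R m₁ g C := by
  have : SigmaFinite (R.trim hm₁) := sigmaFiniteTrim_mono hm₁ hm
  suffices ∃ E, IsCondExpNN R m g E ∧ IsCondExpNN R m₁ g E by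
    obtain ⟨E, hE, hE₁⟩ := this
    exact hE₁.congr_ae (hC.1.mono hm le_rfl) (hE.ae_eq (hm.trans hm₁) hC)
  refine @Measurable.ennreal_induction Y m₂
    (fun g => ∃ E, IsCondExpNN R m g E ∧ IsCondExpNN R m₁ g E) ?_ ?_ ?_ g hg
  · intro c B hB
    obtain ⟨E, hE⟩ := exists_isCondExpNN_indicator_one (R := R) (hm.trans hm₁) B
    have h1 : Measurable (B.indicator fun _ => (1 : ℝ≥0∞)) :=
      measurable_const.indicator (hm₂ B hB)
    have hc : (B.indicator fun _ => c) = fun ω => c * B.indicator (fun _ => 1) ω := by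
      ext ω
      simpa using indicator_const_mul B (fun _ => (1 : ℝ≥0∞)) c ω
    rw [hc]
    exact ⟨_, hE.const_mul (hm.trans hm₁) h1 c, (hR B hB E hE).const_mul hm₁ h1 c⟩
  · intro f f' _ hf _ hE hE'
    obtain ⟨E, hE, hE₁⟩ := hE
    obtain ⟨E', hE', hE'₁⟩ := hE'
    have hf₀ : Measurable f := hf.mono hm₂ le_rfl
    exact ⟨E + E', hE.add (hm.trans hm₁) hf₀ hE', hE₁.add hm₁ hf₀ hE'₁⟩
  · intro f hf hf_mono hE
    choose E hE hE₁ using hE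
    have hf₀ : ∀ n, Measurable (f n) := fun n => (hf n).mono hm₂ le_rfl
    exact ⟨_, IsCondExpNN.iSup (hm.trans hm₁) hf₀ hf_mono hE,
      IsCondExpNN.iSup hm₁ hf₀ hf_mono hE₁⟩

theorem symm (hR : CondIndepNN m m₁ m₂ R) (hm₁ : m ≤ m₁) (hm₂ : m ≤ m₂) (h₁ : m₁ ≤ m0)
    (h₂ : m₂ ≤ m0) [SigmaFinite (R.trim (hm₁.trans h₁))] : CondIndepNN m m₂ m₁ R := by
  intro B hB C hC
  have hm : m ≤ m0 := hm₁.trans h₁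
  refine ⟨hC.1.mono hm₂ le_rfl, fun D hD => ?_⟩
  obtain ⟨CD, hCD⟩ := exists_isCondExpNN_indicator_one (R := R) hm D
  have h1B : Measurable[m₁] (B.indicator fun _ => (1 : ℝ≥0∞)) := measurable_const.indicator hB
  have h1D : Measurable (D.indicator fun _ => (1 : ℝ≥0∞)) :=
    measurable_const.indicator (h₂ D hD)
  calc ∫⁻ ω in D, C ω ∂ R
      = ∫⁻ ω, D.indicator (fun _ => 1) ω * C ω ∂ R :=
        setLIntegral_eq_lintegral_indicator_one_mul (h₂ D hD) C
    _ = ∫⁻ ω, C ω * CD ω ∂ R := by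
        rw [← hCD.lintegral_mul hm h1D hC.1]
        exact lintegral_congr fun _ => mul_comm _ _
    _ = ∫⁻ ω, CD ω * B.indicator (fun _ => 1) ω ∂ R := by
        rw [hC.lintegral_mul hm (h1B.mono h₁ le_rfl) hCD.1]
        exact lintegral_congr fun _ => mul_comm _ _
    _ = ∫⁻ ω in D, B.indicator (fun _ => 1) ω ∂ R := by
        rw [(hR D hD CD hCD).lintegral_mul h₁ h1D h1B,
          setLIntegral_eq_lintegral_indicator_one_mul (h₂ D hD)]

end CondIndepNN

theorem IsCondExpNN.mul (h₁ : m₁ ≤ m0) (h₂ : m₂ ≤ m0) (hm₁ : m ≤ m₁) (hm₂ : m ≤ m₂)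
    (hZ : Measurable[m₂] Z) (hZ' : Measurable Z') (hC : IsCondExpNN R m₁ Z C)
    (hC' : IsCondExpNN R m₂ Z' C') (hCm : Measurable[m] C) (hC'm : Measurable[m] C') :
    IsCondExpNN R m (fun ω => Z ω * Z' ω) (fun ω => C ω * C' ω) := by
  refine ⟨hCm.mul hC'm, fun A hA => ?_⟩
  calc ∫⁻ ω in A, C ω * C' ω ∂ R
      = ∫⁻ ω in A, C' ω * Z ω ∂ R := by
        rw [(hC.restrict h₁ (hm₁ A hA)).lintegral_mul h₁ (hZ.mono h₂ le_rfl)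
          (hC'm.mono hm₁ le_rfl)]
        exact lintegral_congr fun _ => mul_comm _ _
    _ = ∫⁻ ω in A, Z ω * Z' ω ∂ R := by
        rw [(hC'.restrict h₂ (hm₂ A hA)).lintegral_mul h₂ hZ' hZ]
        exact lintegral_congr fun _ => mul_comm _ _

end CondExpNN

theorem sigmaFinite_trim_comap {Y Z : Type*} [m0 : MeasurableSpace Y] [mZ : MeasurableSpace Z]
    {R : Measure Y} {f : Y → Z} (hf : Measurable f) [hσ : SigmaFinite (R.map f)] :
    SigmaFinite (R.trim hf.comap_le) := by
  rw [← map_trim_comap hf] at hσ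
  exact SigmaFinite.of_map _ (Measurable.of_comap_le le_rfl).aemeasurable hσ

theorem mAt_le (t : Icc (0:ℝ) 1) :
    (mAt t : MeasurableSpace (PathSpace X)) ≤ pathSpaceMeasurableSpace X :=
  le_iSup (fun u => MeasurableSpace.comap (canon (X := X) u) inferInstance) t

theorem measurable_canon (t : Icc (0:ℝ) 1) : Measurable (canon (X := X) t) :=
  measurable_iff_comap_le.2 (mAt_le t)

theorem mAt_le_mUpTo {u t : Icc (0:ℝ) 1} (h : u ≤ t) :
    (mAt u : MeasurableSpace (PathSpace X)) ≤ mUpTo t :=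
  le_iSup₂ (f := fun v (_ : v ≤ t) => MeasurableSpace.comap (canon (X := X) v) inferInstance) u h

theorem mAt_le_mFrom {u t : Icc (0:ℝ) 1} (h : t ≤ u) :
    (mAt u : MeasurableSpace (PathSpace X)) ≤ mFrom t :=
  le_iSup₂ (f := fun v (_ : t ≤ v) => MeasurableSpace.comap (canon (X := X) v) inferInstance) u h

theorem mAt_le_mBetween {s u t : Icc (0:ℝ) 1} (hs : s ≤ u) (ht : u ≤ t) :
    (mAt u : MeasurableSpace (PathSpace X)) ≤ mBetween s t :=
  le_iSup₂ (f := fun v (_ : s ≤ v ∧ v ≤ t) =>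
    MeasurableSpace.comap (canon (X := X) v) inferInstance) u ⟨hs, ht⟩

theorem mUpTo_le (t : Icc (0:ℝ) 1) :
    (mUpTo t : MeasurableSpace (PathSpace X)) ≤ pathSpaceMeasurableSpace X :=
  iSup₂_le fun u _ => mAt_le u

theorem mFrom_le (t : Icc (0:ℝ) 1) :
    (mFrom t : MeasurableSpace (PathSpace X)) ≤ pathSpaceMeasurableSpace X :=
  iSup₂_le fun u _ => mAt_le u

theorem mBetween_le (s t : Icc (0:ℝ) 1) :
    (mBetween s t : MeasurableSpace (PathSpace X)) ≤ pathSpaceMeasurableSpace X :=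
  iSup₂_le fun u _ => mAt_le u

theorem mUpTo_mono {s t : Icc (0:ℝ) 1} (h : s ≤ t) :
    (mUpTo s : MeasurableSpace (PathSpace X)) ≤ mUpTo t :=
  iSup₂_le fun _ hu => mAt_le_mUpTo (hu.trans h)

theorem mBetween_le_mUpTo (s t : Icc (0:ℝ) 1) :
    (mBetween s t : MeasurableSpace (PathSpace X)) ≤ mUpTo t :=
  iSup₂_le fun _ hu => mAt_le_mUpTo hu.2

theorem mBetween_le_mFrom (s t : Icc (0:ℝ) 1) :
    (mBetween s t : MeasurableSpace (PathSpace X)) ≤ mFrom s :=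
  iSup₂_le fun _ hu => mAt_le_mFrom hu.1

section MarkovMeasure

variable {R : Measure (PathSpace X)}

theorem Conditionable.sigmaFinite_trim (hR : Conditionable R) (t : Icc (0:ℝ) 1) :
    SigmaFinite (R.trim (mAt_le t)) :=
  have := hR t
  sigmaFinite_trim_comap (measurable_canon t)

theorem IsMarkovMeasure.isCondExpNN_mUpTo (hR : IsMarkovMeasure R) {t : Icc (0:ℝ) 1}
    {β Cβ : PathSpace X → ℝ≥0∞} (hβ : Measurable[mFrom t] β) (hCβ : IsCondExpNN R (mAt t) β Cβ) :
    IsCondExpNN R (mUpTo t) β Cβ :=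
  have := hR.1.sigmaFinite_trim t
  CondIndepNN.isCondExpNN (hR.2 t) (mAt_le_mUpTo le_rfl) (mUpTo_le t) (mFrom_le t) hβ hCβ

theorem IsMarkovMeasure.isCondExpNN_mFrom (hR : IsMarkovMeasure R) {s : Icc (0:ℝ) 1}
    {α Cα : PathSpace X → ℝ≥0∞} (hα : Measurable[mUpTo s] α) (hCα : IsCondExpNN R (mAt s) α Cα) :
    IsCondExpNN R (mFrom s) α Cα :=
  have := hR.1.sigmaFinite_trim s
  have hR' := CondIndepNN.symm (hR.2 s) (mAt_le_mUpTo le_rfl) (mAt_le_mFrom le_rfl) (mUpTo_le s)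
    (mFrom_le s)
  hR'.isCondExpNN (mAt_le_mFrom le_rfl) (mFrom_le s) (mUpTo_le s) hα hCα

end MarkovMeasure

theorem markov_condexp_product_two_times_general
    {X : Type*} [TopologicalSpace X] [MeasurableSpace X]
    (R : Measure (PathSpace X)) (hR : IsMarkovMeasure R)
    (s t : Icc (0:ℝ) 1) (hst : s ≤ t) (α β : PathSpace X → ENNReal)
    (hα : Measurable[mUpTo s] α) (hβ : Measurable[mFrom t] β)
    (Cαβ Cα Cβ : PathSpace X → ENNReal)
    (hαβ : IsCondExpNN R (mBetween s t) (fun ω => α ω * β ω) Cαβ)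
    (hCα : IsCondExpNN R (mAt s) α Cα) (hCβ : IsCondExpNN R (mAt t) β Cβ) :
    ∀ᵐ ω ∂ R,
      (Cαβ ω = 0 → Cα ω = 0 ∨ Cβ ω = 0) ∧
      (0 < Cαβ ω → 0 < Cα ω ∧ 0 < Cβ ω ∧ Cαβ ω = Cα ω * Cβ ω) := by
  have : SigmaFinite (R.trim (mBetween_le s t)) :=
    have := hR.1.sigmaFinite_trim s
    sigmaFiniteTrim_mono _ (mAt_le_mBetween le_rfl hst)
  have hprod : IsCondExpNN R (mBetween s t) (fun ω => α ω * β ω) fun ω => Cα ω * Cβ ω :=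
    (hR.isCondExpNN_mFrom hα hCα).mul (mFrom_le s) (mUpTo_le t) (mBetween_le_mFrom s t)
      (mBetween_le_mUpTo s t) (hα.mono (mUpTo_mono hst) le_rfl) (hβ.mono (mFrom_le t) le_rfl)
      (hR.isCondExpNN_mUpTo hβ hCβ) (hCα.1.mono (mAt_le_mBetween le_rfl hst) le_rfl)
      (hCβ.1.mono (mAt_le_mBetween hst le_rfl) le_rfl)
  filter_upwards [hαβ.ae_eq (mBetween_le s t) hprod] with ω hω
  rw [hω, ENNReal.mul_pos_iff]
  exact ⟨mul_eq_zero.1, fun h => ⟨h.1, h.2, rfl⟩⟩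

/-- Lemma (Léonard, Lemma 3.2-(1)). Let `R` be a Markov measure, `0 ≤ s ≤ t ≤ 1`, `α` a
nonnegative `σ(X_{[0,s]})`-measurable function and `β` a nonnegative
`σ(X_{[t,1]})`-measurable function. Then, `R`-almost everywhere: if
`E_R(αβ|X_{[s,t]}) = 0` then `E_R(α|X_s) = 0` or `E_R(β|X_t) = 0`; and if
`E_R(αβ|X_{[s,t]}) > 0` then `E_R(α|X_s) > 0`, `E_R(β|X_t) > 0` and
`E_R(αβ|X_{[s,t]}) = E_R(α|X_s)·E_R(β|X_t) ∈ (0,∞]`. -/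
theorem markov_condexp_product_two_times
    {X : Type*} [TopologicalSpace X] [MeasurableSpace X] [PolishSpace X] [BorelSpace X]
    (R : Measure (PathSpace X)) (hR : IsMarkovMeasure R)
    (s t : Icc (0:ℝ) 1) (hst : s ≤ t) (α β : PathSpace X → ENNReal)
    (hα : Measurable[mUpTo s] α) (hβ : Measurable[mFrom t] β)
    (hαfin : ∀ ω, α ω ≠ ⊤) (hβfin : ∀ ω, β ω ≠ ⊤)
    (Cαβ Cα Cβ : PathSpace X → ENNReal)
    (hαβ : IsCondExpNN R (mBetween s t) (fun ω => α ω * β ω) Cαβ)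
    (hCα : IsCondExpNN R (mAt s) α Cα) (hCβ : IsCondExpNN R (mAt t) β Cβ) :
    ∀ᵐ ω ∂ R,
      (Cαβ ω = 0 → Cα ω = 0 ∨ Cβ ω = 0) ∧
      (0 < Cαβ ω → 0 < Cα ω ∧ 0 < Cβ ω ∧ Cαβ ω = Cα ω * Cβ ω) :=
  markov_condexp_product_two_times_general R hR s t hst α β hα hβ Cαβ Cα Cβ hαβ hCα hCβ
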